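/- Let λ ∈ {1,−1}, N ≥ 1 and u ∈ ℍ_N. For every t ≥ 0, ‖S^N(t)(u + iλt|u|²u) − u‖ ≤ √(2t) · (Σ_{k=1}^N k²π² |∫₀¹ u e_k dx|²)^{1/2} + t‖u‖³_{L⁶(0,1)}. -/

import Mathlib

open MeasureTheory Complex Real Set
open scoped ENNReal

noncomputable section

/-- Lebesgue measure restricted to the interval `(0,1)`. -/
def μ01 : Measure ℝ := volume.restrict (Ioo (0:ℝ) 1)

/-- The `L^p((0,1);ℂ)` norm. -/
def lpnorm (p : ℝ≥0∞) (u : ℝ → ℂ) : ℝ := (eLpNorm u p μ01).toReal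

/-- The pointwise cubic nonlinearity `|u|²u`. -/
def cubic (u : ℝ → ℂ) : ℝ → ℂ := fun x => ((‖u x‖ ^ 2 : ℝ) : ℂ) * u x

/-- The Dirichlet sine eigenfunctions `e_k(x) = √2 sin(kπx)`, as elements of `L²((0,1);ℂ)`. -/
def eFun (k : ℕ) : ℝ → ℂ := fun x => ((Real.sqrt 2 * Real.sin (k * Real.pi * x) : ℝ) : ℂ)

/-- The `k`-th Fourier sine coefficient `∫₀¹ u e_k`. -/
def coeff (k : ℕ) (u : ℝ → ℂ) : ℂ := ∫ x in Ioo (0:ℝ) 1, u x * eFun k x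

/-- The spectral Galerkin projection `P^N`. -/
def PN (N : ℕ) (u : ℝ → ℂ) : ℝ → ℂ :=
  fun x => ∑ k ∈ Finset.Icc 1 N, coeff k u * eFun k x

/-- The truncated Schrödinger group `S^N(t) = P^N e^{itΔ}`. -/
def SN (N : ℕ) (t : ℝ) (u : ℝ → ℂ) : ℝ → ℂ :=
  fun x => ∑ k ∈ Finset.Icc 1 N,
    Complex.exp (-Complex.I * (((k:ℝ)^2 * Real.pi^2 * t : ℝ) : ℂ)) * coeff k u * eFun k x

/-- The space `ℍ_N`: the complex span of `e_1, …, e_N`. -/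
def HN (N : ℕ) : Set (ℝ → ℂ) :=
  {u | ∃ c : ℕ → ℂ, u = fun x => ∑ k ∈ Finset.Icc 1 N, c k * eFun k x}

/-- The discrete Dirichlet Laplacian on `ℍ_N`, determined by `Δ_N e_k = −k²π² e_k`. -/
def DeltaN (N : ℕ) (u : ℝ → ℂ) : ℝ → ℂ :=
  fun x => ∑ k ∈ Finset.Icc 1 N, (-(((k:ℝ)^2 * Real.pi^2 : ℝ) : ℂ)) * coeff k u * eFun k x

/-- The squared `ℍ¹` norm `‖u‖² + ‖u′‖²`. -/
def h1normSq (u : ℝ → ℂ) : ℝ := (lpnorm 2 u)^2 + (lpnorm 2 (deriv u))^2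

/-- The Hamiltonian `ℋ(u) = ½‖u′‖² − (λ/4)‖u‖⁴_{L⁴}`. -/
def Ham (l : ℝ) (u : ℝ → ℂ) : ℝ :=
  (1/2) * (lpnorm 2 (deriv u))^2 - (l/4) * (lpnorm 4 u)^4

/-- The functional `f(u) = ‖u″‖² + λ Re ∫₀¹ u″ conj(|u|²u)`. -/
def fFun (l : ℝ) (u : ℝ → ℂ) : ℝ :=
  (lpnorm 2 (deriv (deriv u)))^2
    + l * (∫ x in Ioo (0:ℝ) 1, deriv (deriv u) x * (starRingEnd ℂ) (cubic u x)).re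


/-!
On `ℍ_N` the flow splits as `(S^N(t)u − u) + iλt S^N(t)(|u|²u)`. In the orthonormal basis `e_k`
the first term has squared norm `∑ |e^{−ik²π²t} − 1|² |û_k|² ≤ 2t ∑ k²π² |û_k|²`, because
`|e^{−iθ} − 1|² ≤ min(θ², 4) ≤ 2θ`. By Bessel's inequality `S^N(t)` is an `L²` contraction, so the
second term has norm at most `t ‖|u|²u‖ = t ‖u‖³_{L⁶}`.
-/

theorem Orthonormal.norm_sum_smul_sq {𝕜 E ι : Type*} [RCLike 𝕜] [NormedAddCommGroup E]
    [InnerProductSpace 𝕜 E] {v : ι → E} (hv : Orthonormal 𝕜 v) (a : ι → 𝕜) (s : Finset ι) :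
    ‖∑ i ∈ s, a i • v i‖ ^ 2 = ∑ i ∈ s, ‖a i‖ ^ 2 := by
  rw [@norm_sq_eq_re_inner 𝕜, hv.inner_sum, map_sum]
  simp [RCLike.conj_mul]

theorem sum_subtype_one_le_Icc {M : Type*} [AddCommMonoid M] (N : ℕ) (f : ℕ → M) :
    ∑ k ∈ (Finset.Icc 1 N).subtype (1 ≤ ·), f k = ∑ k ∈ Finset.Icc 1 N, f k :=
  Finset.sum_subtype_of_mem f fun _ hk => (Finset.mem_Icc.1 hk).1

instance : IsFiniteMeasure μ01 := by
  unfold μ01; infer_instance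

theorem memLp_of_continuous {f : ℝ → ℂ} (hf : Continuous f) (p : ℝ≥0∞) : MemLp f p μ01 := by
  obtain ⟨C, hC⟩ :=
    (isCompact_Icc (a := (0:ℝ)) (b := 1)).exists_bound_of_continuousOn hf.continuousOn
  refine MemLp.of_bound hf.aestronglyMeasurable C ?_
  exact (ae_restrict_iff' measurableSet_Ioo).2
    (ae_of_all _ fun x hx => hC x (Ioo_subset_Icc_self hx))

theorem lpnorm_eq_norm_toLp {f : ℝ → ℂ} {p : ℝ≥0∞} (hf : MemLp f p μ01) :
    lpnorm p f = ‖hf.toLp f‖ :=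
  (Lp.norm_toLp f hf).symm

theorem lpnorm_add_le {f g : ℝ → ℂ} {p : ℝ≥0∞} (hp : 1 ≤ p) (hf : MemLp f p μ01)
    (hg : MemLp g p μ01) : lpnorm p (fun x => f x + g x) ≤ lpnorm p f + lpnorm p g :=
  ENNReal.toReal_le_add (eLpNorm_add_le hf.1 hg.1 hp) hf.eLpNorm_ne_top hg.eLpNorm_ne_top

theorem lpnorm_const_mul (c : ℂ) (f : ℝ → ℂ) (p : ℝ≥0∞) :
    lpnorm p (fun x => c * f x) = ‖c‖ * lpnorm p f := by
  rw [lpnorm, lpnorm, ← toReal_enorm c, ← ENNReal.toReal_mul, ← eLpNorm_const_smul]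
  rfl

theorem continuous_cubic {u : ℝ → ℂ} (hu : Continuous u) : Continuous (cubic u) := by
  unfold cubic; fun_prop

theorem lpnorm_cubic (u : ℝ → ℂ) : lpnorm 2 (cubic u) = lpnorm 6 u ^ 3 := by
  have hnorm : ∀ x, ‖cubic u x‖ = ‖‖u x‖ ^ (3 : ℝ)‖ := by
    intro x
    simp only [cubic, ofReal_pow, Complex.norm_mul, norm_pow, norm_real, norm_norm, rpow_ofNat]
    ring
  rw [lpnorm, eLpNorm_congr_norm_ae (ae_of_all _ hnorm),
    eLpNorm_norm_rpow u (by norm_num : (0:ℝ) < 3), ← ENNReal.toReal_rpow, lpnorm]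
  norm_num

theorem norm_exp_neg_I_mul_ofReal (θ : ℝ) : ‖Complex.exp (-Complex.I * θ)‖ = 1 := by
  rw [show -Complex.I * θ = ((-θ : ℝ) : ℂ) * Complex.I by push_cast; ring,
    Complex.norm_exp_ofReal_mul_I]

theorem norm_exp_neg_I_mul_sub_one_sq_le {θ : ℝ} (hθ : 0 ≤ θ) :
    ‖Complex.exp (-Complex.I * θ) - 1‖ ^ 2 ≤ 2 * θ := by
  have h : -Complex.I * θ = Complex.I * ((-θ : ℝ) : ℂ) := by push_cast; ring
  have hle : ‖Complex.exp (-Complex.I * θ) - 1‖ ≤ θ := by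
    simpa [h, abs_of_nonneg hθ] using Real.norm_exp_I_mul_ofReal_sub_one_le (x := -θ)
  have hle2 : ‖Complex.exp (-Complex.I * θ) - 1‖ ≤ 2 := by
    refine (norm_sub_le _ _).trans ?_
    rw [norm_exp_neg_I_mul_ofReal, norm_one]; norm_num
  nlinarith [norm_nonneg (Complex.exp (-Complex.I * θ) - 1)]

theorem integral_cos_int_mul_pi (m : ℤ) :
    ∫ x in (0:ℝ)..1, Real.cos (m * π * x) = if m = 0 then 1 else 0 := by
  split_ifs with hm
  · simp [hm]
  · have hc : (m : ℝ) * π ≠ 0 := mul_ne_zero (Int.cast_ne_zero.2 hm) Real.pi_ne_zero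
    simp [intervalIntegral.integral_comp_mul_left (fun y => Real.cos y) hc, integral_cos,
      Real.sin_int_mul_pi]

theorem integral_eFun_mul_eFun {j k : ℕ} (hj : 1 ≤ j) (hk : 1 ≤ k) :
    ∫ x in Ioo (0:ℝ) 1, eFun j x * eFun k x = if j = k then 1 else 0 := by
  have hprod : ∀ x : ℝ, √2 * Real.sin (j * π * x) * (√2 * Real.sin (k * π * x))
      = Real.cos (((j - k : ℤ) : ℝ) * π * x) - Real.cos (((j + k : ℤ) : ℝ) * π * x) := by
    intro x
    have h2 : √2 * √2 = (2 : ℝ) := Real.mul_self_sqrt zero_le_two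
    push_cast
    rw [sub_mul, add_mul, sub_mul, add_mul, ← Real.two_mul_sin_mul_sin]
    linear_combination (Real.sin (j * π * x) * Real.sin (k * π * x)) * h2
  have hint : ∀ m : ℤ, IntervalIntegrable (fun x => Real.cos (m * π * x)) volume 0 1 :=
    fun m => (by fun_prop : Continuous fun x : ℝ => Real.cos (m * π * x)).intervalIntegrable 0 1
  have hreal : ∫ x in Ioo (0:ℝ) 1, √2 * Real.sin (j * π * x) * (√2 * Real.sin (k * π * x))
      = if j = k then 1 else 0 := by
    simp only [hprod]
    rw [← integral_Ioc_eq_integral_Ioo, ← intervalIntegral.integral_of_le zero_le_one,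
      intervalIntegral.integral_sub (hint _) (hint _), integral_cos_int_mul_pi,
      integral_cos_int_mul_pi]
    by_cases h : j = k <;> simp [h, sub_eq_zero] <;> omega
  have hcast : ∀ x, eFun j x * eFun k x
      = ((√2 * Real.sin (j * π * x) * (√2 * Real.sin (k * π * x)) : ℝ) : ℂ) :=
    fun x => (Complex.ofReal_mul _ _).symm
  simp only [hcast, integral_complex_ofReal, hreal]
  split_ifs <;> simp

theorem continuous_eFun (k : ℕ) : Continuous (eFun k) := by
  unfold eFun; fun_prop

def sineSeries (N : ℕ) (a : ℕ → ℂ) : ℝ → ℂ := fun x => ∑ k ∈ Finset.Icc 1 N, a k * eFun k x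

theorem continuous_sineSeries (N : ℕ) (a : ℕ → ℂ) : Continuous (sineSeries N a) :=
  continuous_finsetSum _ fun k _ => continuous_const.mul (continuous_eFun k)

def eL2 (k : ℕ) : Lp ℂ 2 μ01 := (memLp_of_continuous (continuous_eFun k) 2).toLp (eFun k)

theorem inner_eL2_toLp {v : ℝ → ℂ} (hv : MemLp v 2 μ01) (k : ℕ) :
    inner ℂ (eL2 k) (hv.toLp v) = coeff k v := by
  rw [L2.inner_def, coeff, ← μ01]
  refine integral_congr_ae ?_
  filter_upwards [(memLp_of_continuous (continuous_eFun k) 2).coeFn_toLp, hv.coeFn_toLp]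
    with x hek hvx
  rw [RCLike.inner_apply, eL2, hek, hvx, eFun, Complex.conj_ofReal]

theorem orthonormal_eL2 : Orthonormal ℂ (fun k : {k : ℕ // 1 ≤ k} => eL2 k) := by
  refine orthonormal_iff_ite.2 fun j k => ?_
  refine (inner_eL2_toLp (memLp_of_continuous (continuous_eFun k) 2) j).trans ?_
  rw [coeff, integral_eFun_mul_eFun k.2 j.2]
  simp only [Subtype.ext_iff, eq_comm]

theorem toLp_sineSeries (N : ℕ) (a : ℕ → ℂ) :
    (memLp_of_continuous (continuous_sineSeries N a) 2).toLp (sineSeries N a)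
      = ∑ k ∈ Finset.Icc 1 N, a k • eL2 k := by
  refine Lp.ext_iff.2
    (((memLp_of_continuous (continuous_sineSeries N a) 2).coeFn_toLp).trans ?_)
  have hterm : ∀ᵐ x ∂μ01, ∀ k ∈ Finset.Icc 1 N, (a k • eL2 k) x = a k * eFun k x := by
    refine (Filter.eventually_all_finset _).2 fun k _ => ?_
    filter_upwards [Lp.coeFn_smul (a k) (eL2 k),
      (memLp_of_continuous (continuous_eFun k) 2).coeFn_toLp] with x hsmul he
    rw [hsmul, Pi.smul_apply, eL2, he, smul_eq_mul]
  filter_upwards [hterm, Lp.coeFn_fun_finsetSum (Finset.Icc 1 N) fun k => a k • eL2 k]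
    with x hx hsum
  rw [hsum]
  exact Finset.sum_congr rfl fun k hk => (hx k hk).symm

theorem lpnorm_sineSeries (N : ℕ) (a : ℕ → ℂ) :
    lpnorm 2 (sineSeries N a) = √(∑ k ∈ Finset.Icc 1 N, ‖a k‖ ^ 2) := by
  rw [lpnorm_eq_norm_toLp (memLp_of_continuous (continuous_sineSeries N a) 2), toLp_sineSeries,
    ← sum_subtype_one_le_Icc N (fun k => a k • eL2 k),
    ← sum_subtype_one_le_Icc N (fun k => ‖a k‖ ^ 2),
    ← orthonormal_eL2.norm_sum_smul_sq (fun k => a k), Real.sqrt_sq (norm_nonneg _)]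

theorem coeff_sineSeries {N k : ℕ} (hk : k ∈ Finset.Icc 1 N) (a : ℕ → ℂ) :
    coeff k (sineSeries N a) = a k := by
  rw [← inner_eL2_toLp (memLp_of_continuous (continuous_sineSeries N a) 2), toLp_sineSeries,
    ← sum_subtype_one_le_Icc N (fun k => a k • eL2 k)]
  exact orthonormal_eL2.inner_right_sum (fun k => a k) (i := ⟨k, (Finset.mem_Icc.1 hk).1⟩)
    (Finset.mem_subtype.2 hk)

theorem sum_norm_coeff_sq_le (N : ℕ) {v : ℝ → ℂ} (hv : MemLp v 2 μ01) :
    ∑ k ∈ Finset.Icc 1 N, ‖coeff k v‖ ^ 2 ≤ lpnorm 2 v ^ 2 := by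
  rw [lpnorm_eq_norm_toLp hv, ← sum_subtype_one_le_Icc N (fun k => ‖coeff k v‖ ^ 2)]
  simp only [← inner_eL2_toLp hv]
  exact orthonormal_eL2.sum_inner_products_le _

theorem coeff_add_const_mul {f g : ℝ → ℂ} (hf : MemLp f 2 μ01) (hg : MemLp g 2 μ01) (c : ℂ)
    (k : ℕ) : coeff k (fun y => f y + c * g y) = coeff k f + c * coeff k g := by
  change coeff k (f + c • g) = _
  rw [← inner_eL2_toLp hf, ← inner_eL2_toLp hg, ← inner_eL2_toLp (hf.add (hg.const_smul c)),
    MemLp.toLp_add hf (hg.const_smul c), MemLp.toLp_const_smul, inner_add_right,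
    inner_smul_right]

theorem mem_HN_iff {N : ℕ} {v : ℝ → ℂ} : v ∈ HN N ↔ ∃ c, v = sineSeries N c := Iff.rfl

theorem continuous_of_mem_HN {N : ℕ} {v : ℝ → ℂ} (hv : v ∈ HN N) : Continuous v := by
  obtain ⟨c, rfl⟩ := mem_HN_iff.1 hv
  exact continuous_sineSeries N c

theorem sineSeries_coeff {N : ℕ} {v : ℝ → ℂ} (hv : v ∈ HN N) :
    sineSeries N (fun k => coeff k v) = v := by
  obtain ⟨c, rfl⟩ := mem_HN_iff.1 hv
  funext x
  exact Finset.sum_congr rfl fun k hk => congrArg (· * eFun k x) (coeff_sineSeries hk c)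

theorem SN_eq_sineSeries (N : ℕ) (t : ℝ) (v : ℝ → ℂ) :
    SN N t v = sineSeries N
      (fun k => Complex.exp (-Complex.I * (((k:ℝ)^2 * π^2 * t : ℝ) : ℂ)) * coeff k v) :=
  rfl

theorem continuous_SN (N : ℕ) (t : ℝ) (v : ℝ → ℂ) : Continuous (SN N t v) :=
  continuous_sineSeries N _

theorem SN_add_const_mul (N : ℕ) (t : ℝ) {f g : ℝ → ℂ} (hf : MemLp f 2 μ01)
    (hg : MemLp g 2 μ01) (c : ℂ) (x : ℝ) :
    SN N t (fun y => f y + c * g y) x = SN N t f x + c * SN N t g x := by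
  simp only [SN, coeff_add_const_mul hf hg, Finset.mul_sum, ← Finset.sum_add_distrib]
  exact Finset.sum_congr rfl fun k _ => by ring

theorem lpnorm_SN_le (N : ℕ) (t : ℝ) {v : ℝ → ℂ} (hv : MemLp v 2 μ01) :
    lpnorm 2 (SN N t v) ≤ lpnorm 2 v := by
  rw [SN_eq_sineSeries, lpnorm_sineSeries, Real.sqrt_le_iff]
  refine ⟨ENNReal.toReal_nonneg, ?_⟩
  simpa only [norm_mul, norm_exp_neg_I_mul_ofReal, one_mul] using sum_norm_coeff_sq_le N hv

theorem lpnorm_SN_sub_self_le {N : ℕ} {v : ℝ → ℂ} (hv : v ∈ HN N) {t : ℝ} (ht : 0 ≤ t) :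
    lpnorm 2 (fun x => SN N t v x - v x)
      ≤ √(2 * t) * √(∑ k ∈ Finset.Icc 1 N, (k:ℝ)^2 * π^2 * ‖coeff k v‖^2) := by
  have hdiff : (fun x => SN N t v x - v x) = sineSeries N
      (fun k => (Complex.exp (-Complex.I * (((k:ℝ)^2 * π^2 * t : ℝ) : ℂ)) - 1) * coeff k v) := by
    funext x
    rw [← congrFun (sineSeries_coeff hv) x]
    simp only [SN, sineSeries, ← Finset.sum_sub_distrib]
    exact Finset.sum_congr rfl fun k _ => by ring
  rw [hdiff, lpnorm_sineSeries, ← Real.sqrt_mul (by positivity), Finset.mul_sum]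
  gcongr with k
  rw [norm_mul, mul_pow]
  nlinarith [norm_exp_neg_I_mul_sub_one_sq_le (θ := (k:ℝ)^2 * π^2 * t) (by positivity),
    sq_nonneg ‖coeff k v‖]

theorem stmt3_general (l : ℝ) (hl : l = 1 ∨ l = -1) (N : ℕ)
    (u : ℝ → ℂ) (hu : u ∈ HN N) (t : ℝ) (ht : 0 ≤ t) :
    lpnorm 2 (fun x => SN N t (fun y => u y + Complex.I * l * t * cubic u y) x - u x)
      ≤ Real.sqrt (2*t)
          * Real.sqrt (∑ k ∈ Finset.Icc 1 N,
              (k:ℝ)^2 * Real.pi^2 * ‖coeff k u‖^2)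
        + t * (lpnorm 6 u)^3 := by
  have hu_cont := continuous_of_mem_HN hu
  have hcubic : MemLp (cubic u) 2 μ01 := memLp_of_continuous (continuous_cubic hu_cont) 2
  have hlt : ‖Complex.I * l * t‖ = t := by
    rcases hl with rfl | rfl <;> simp [abs_of_nonneg ht]
  simp only [SN_add_const_mul N t (memLp_of_continuous hu_cont 2) hcubic]
  calc _ = lpnorm 2 (fun x => (SN N t u x - u x) + Complex.I * l * t * SN N t (cubic u) x) := by
        congr 1; funext x; ring
    _ ≤ _ := lpnorm_add_le one_le_two
          (memLp_of_continuous ((continuous_SN N t u).sub hu_cont) 2)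
          (memLp_of_continuous (continuous_const.mul (continuous_SN N t _)) 2)
    _ ≤ _ := by
      rw [lpnorm_const_mul, hlt, ← lpnorm_cubic]
      gcongr
      · exact lpnorm_SN_sub_self_le hu ht
      · exact lpnorm_SN_le N t hcubic

/-- Hölder-in-time estimate for the deterministic substep flow. -/
theorem stmt3 (l : ℝ) (hl : l = 1 ∨ l = -1) (N : ℕ) (hN : 1 ≤ N)
    (u : ℝ → ℂ) (hu : u ∈ HN N) (t : ℝ) (ht : 0 ≤ t) :
    lpnorm 2 (fun x => SN N t (fun y => u y + Complex.I * l * t * cubic u y) x - u x)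
      ≤ Real.sqrt (2*t)
          * Real.sqrt (∑ k ∈ Finset.Icc 1 N,
              (k:ℝ)^2 * Real.pi^2 * ‖coeff k u‖^2)
        + t * (lpnorm 6 u)^3 :=
  stmt3_general l hl N u hu t ht
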